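/- Let K be a field equipped with a set M of absolute values satisfying the product formula (∏_{v∈M}|x|_v = 1 for all x ∈ K^×, with all but finitely many factors equal to 1), and suppose all v ∈ M are non-archimedean with |m|_v = 1 for integers 2 ≤ m ≤ d. Let d ≥ 3 and c₁,…,c_{d−1} ∈ K satisfy c₁⋯c_{d−1} = (−1)^{d−1}λ with λ ∈ K^× and |λ|_v = 1 for all v. Let S = {v ∈ M : 5 log|c₁|_v < log‖c‖_v}. If log⁺‖c‖_v = 0 for every v ∈ S, then h(c) := ∑_{v∈M} log⁺‖c‖_v = 0. -/

import Mathlib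

open Real

/-!
Write `x = c₁`. Since `|λ|_v = 1`, at every place `∏ᵢ |cᵢ|_v = 1`, so `‖c‖_v ≤ 1` forces
`|x|_v = 1`. Hence `log⁺‖c‖_v ≤ 5 log|x|_v` at every place: if `‖c‖_v ≤ 1` both sides
vanish, and otherwise `v ∉ S` by hypothesis, which is exactly the inequality. Summing over
all places, the product formula for `x` gives `0 ≤ h(c) ≤ 5 ∑_v log|x|_v = 0`.
-/

lemma AbsoluteValue.eq_one_of_map_prod_eq_one {R ι : Type*} [CommRing R] [IsDomain R]
    (abv : AbsoluteValue R ℝ) {s : Finset ι} {c : ι → R} (hprod : abv (∏ i ∈ s, c i) = 1)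
    (hle : ∀ i ∈ s, abv (c i) ≤ 1) {j : ι} (hj : j ∈ s) : abv (c j) = 1 := by
  classical
  rw [map_prod, ← Finset.mul_prod_erase s _ hj] at hprod
  have hrest : ∏ i ∈ s.erase j, abv (c i) ≤ 1 :=
    Finset.prod_le_one (fun i _ => abv.nonneg _) fun i hi => hle i (Finset.mem_of_mem_erase hi)
  nlinarith [hle j hj, abv.nonneg (c j)]

lemma finsum_eq_zero_of_nonneg_of_le {α : Type*} {f g : α → ℝ} (hf : 0 ≤ f) (hfg : f ≤ g)
    (hg : g.HasFiniteSupport) (hsum : ∑ᶠ a, g a = 0) : ∑ᶠ a, f a = 0 := by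
  have hsupp : f.support ⊆ g.support := fun a hfa hga =>
    hfa (le_antisymm (hga ▸ hfg a) (hf a))
  exact le_antisymm (hsum ▸ finsum_le_finsum' (hg.subset hsupp) hg hfg) (finsum_nonneg hf)

lemma finsum_log_eq_zero_of_finprod_eq_one {V : Type*} {f : V → ℝ} (hpos : ∀ v, 0 < f v)
    (hprod : ∏ᶠ v, f v = 1) : ∑ᶠ v, log (f v) = 0 := by
  rw [← log_finprod hpos, hprod, log_one]

/-- over a product-formula field whose places are all non-archimedean with
`|m|_v = 1` for `2 ≤ m ≤ d`, if `c₁⋯c_{d−1} = (−1)^{d−1}λ` with `|λ|_v = 1` for all `v`,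
and `log⁺‖c‖_v = 0` for every `v` in `S = {v : 5log|c₁|_v < log‖c‖_v}`, then
`h(c) = ∑_v log⁺‖c‖_v = 0`. -/
theorem height_zero_of_S_trivial {K : Type*} [Field K] {V : Type*}
    (av : V → AbsoluteValue K ℝ)
    (d : ℕ) (hd : 3 ≤ d)
    (hfin : ∀ x : K, x ≠ 0 → {v | av v x ≠ 1}.Finite)
    (hprod : ∀ x : K, x ≠ 0 → ∏ᶠ v, av v x = 1)
    (c : Fin (d - 1) → K) (lam : K) (hlam : lam ≠ 0)
    (hrel : ∏ i, c i = (-1) ^ (d - 1) * lam)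
    (hlamv : ∀ v, av v lam = 1)
    (cnorm : V → ℝ)
    (hcnorm : ∀ v, cnorm v = Finset.univ.sup'
      (Finset.univ_nonempty_iff.mpr ⟨(⟨0, by omega⟩ : Fin (d - 1))⟩) (fun i => av v (c i)))
    (S : Set V) (hS : S = {v | 5 * Real.log (av v (c ⟨0, by omega⟩)) < Real.log (cnorm v)})
    (hStriv : ∀ v ∈ S, max 0 (Real.log (cnorm v)) = 0) :
    ∑ᶠ v, max 0 (Real.log (cnorm v)) = 0 := by
  set x := c ⟨0, by omega⟩
  have hx : x ≠ 0 := fun h => by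
    simpa [hrel, hlam] using Finset.prod_eq_zero (Finset.mem_univ _) h
  have hunit : ∀ v, av v (∏ i, c i) = 1 := by simp [hrel, hlamv]
  have hle : ∀ v i, av v (c i) ≤ cnorm v := fun v i => by
    rw [hcnorm]
    exact Finset.le_sup' (fun i => av v (c i)) (Finset.mem_univ i)
  have hlocal : ∀ v, max 0 (log (cnorm v)) ≤ 5 * log (av v x) := by
    intro v
    by_cases hv : cnorm v ≤ 1
    · have hxv : av v x = 1 := (av v).eq_one_of_map_prod_eq_one (hunit v)
        (fun i _ => (hle v i).trans hv) (Finset.mem_univ _)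
      rw [hxv, log_one, mul_zero, max_eq_left (log_nonpos ((av v).nonneg x |>.trans (hle v _)) hv)]
    · have hlog : 0 < log (cnorm v) := log_pos (not_le.mp hv)
      have hvS : v ∉ S := fun hvS => by linarith [hStriv v hvS, le_max_right 0 (log (cnorm v))]
      rw [hS, Set.mem_ofPred_eq, not_lt] at hvS
      rwa [max_eq_right hlog.le]
  have hsupp : (fun v => 5 * log (av v x)).HasFiniteSupport :=
    (hfin x hx).subset fun v hv hxv => hv (by simp [hxv])
  have hglobal : ∑ᶠ v, 5 * log (av v x) = 0 := by
    rw [← mul_finsum, finsum_log_eq_zero_of_finprod_eq_one (fun v => (av v).pos hx) (hprod x hx),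
      mul_zero]
  exact finsum_eq_zero_of_nonneg_of_le (fun v => le_max_left _ _) hlocal hsupp hglobal
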